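/- arXiv:2503.08310 — 3 statements merged into one kernel-verified Lean document; each statement's English description precedes it below -/
import Mathlib

section
/- Let U ⊆ ℝ^m and D ⊆ ℝ^ℓ be compact, convex, nonempty, and let B ∈ ℝ^{n×m}, E ∈ ℝ^{n×ℓ}. Suppose W := (BU) ⊖ (−(ED)) is nonempty and that W ⊕ (−(ED)) = BU. Then for all p ∈ ℝ^n, max_{u ∈ U} min_{d ∈ D} ⟨−p, Bu + Ed⟩ = max_{ω ∈ W} ⟨−p, ω⟩. -/
open Set RealInnerProductSpace Pointwise

/-- under the trimming assumptions, the max-min Hamiltonian over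
  `U`, `D` equals the max over the trimmed set `W`. -/
theorem maxmin_eq_max_over_trimmed {n m l : ℕ}
    (U : Set (EuclideanSpace ℝ (Fin m))) (D : Set (EuclideanSpace ℝ (Fin l)))
    (hUc : IsCompact U) (hUconv : Convex ℝ U) (hUne : U.Nonempty)
    (hDc : IsCompact D) (hDconv : Convex ℝ D) (hDne : D.Nonempty)
    (B : EuclideanSpace ℝ (Fin m) →ₗ[ℝ] EuclideanSpace ℝ (Fin n))
    (E : EuclideanSpace ℝ (Fin l) →ₗ[ℝ] EuclideanSpace ℝ (Fin n))
    (W : Set (EuclideanSpace ℝ (Fin n)))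
    (hW : W = {c | ∀ d ∈ D, c - E d ∈ B '' U})
    (hWne : W.Nonempty)
    (hWsum : W + -(E '' D) = B '' U) :
    ∀ p : EuclideanSpace ℝ (Fin n),
      sSup ((fun u => sInf ((fun d => ⟪-p, B u + E d⟫) '' D)) '' U)
        = sSup ((fun ω => ⟪-p, ω⟫) '' W) := by
  intro p
  classical
  obtain ⟨d0, hd0⟩ := hDne
  set g : EuclideanSpace ℝ (Fin n) →L[ℝ] ℝ := innerSL ℝ (-p) with hgdef
  have hgapp : ∀ x, g x = ⟪-p, x⟫ := fun x => rfl
  set A : Set ℝ := g '' (B '' U) with hA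
  set T : Set ℝ := g '' (E '' D) with hT
  set FW : Set ℝ := (fun ω => ⟪-p, ω⟫) '' W with hFW
  have hFWg : FW = g '' W := rfl
  -- compactness and boundedness
  have hAcomp : IsCompact A :=
    ((hUc.image B.continuous_of_finiteDimensional).image g.continuous)
  have hTcomp : IsCompact T :=
    ((hDc.image E.continuous_of_finiteDimensional).image g.continuous)
  have hAne : A.Nonempty := (hUne.image _).image _
  have hTne : T.Nonempty := ((Set.nonempty_of_mem hd0).image _).image _
  have hAbdd : BddAbove A := hAcomp.bddAbove
  have hTbddB : BddBelow T := hTcomp.bddBelow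
  have hTbddA : BddAbove T := hTcomp.bddAbove
  have hFWne : FW.Nonempty := hWne.image _
  -- image of the Minkowski sum equation
  have hsum : FW + (-T) = A := by
    rw [hFWg, hT, hA, ← hWsum, Set.image_add, Set.image_neg g]
  have hFWbdd : BddAbove FW := by
    obtain ⟨M, hM⟩ := hAbdd
    refine ⟨M + ⟪-p, E d0⟫, fun y hy => ?_⟩
    have hmem : y + (-⟪-p, E d0⟫) ∈ A := by
      rw [← hsum]
      exact Set.add_mem_add hy (Set.neg_mem_neg.mpr ⟨E d0, ⟨d0, hd0, rfl⟩, rfl⟩)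
    have := hM hmem
    linarith
  have hnegTne : (-T).Nonempty := hTne.neg
  have hnegTbdd : BddAbove (-T) := hTbddB.neg
  -- sSup A = sSup FW - sInf T
  have hsupA : sSup A = sSup FW + sSup (-T) := by
    rw [← hsum]; exact csSup_add hFWne hFWbdd hnegTne hnegTbdd
  have hnegT : sSup (-T) = -sInf T := csSup_neg hTne hTbddB
  -- the inner infimum
  have hinner : ∀ u : EuclideanSpace ℝ (Fin m),
      sInf ((fun d => ⟪-p, B u + E d⟫) '' D) = ⟪-p, B u⟫ + sInf T := by
    intro u
    have himg : (fun d => ⟪-p, B u + E d⟫) '' D = {⟪-p, B u⟫} + T := by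
      have h1 : (fun d => ⟪-p, B u + E d⟫) '' D
          = (fun t => ⟪-p, B u⟫ + t) '' T := by
        rw [hT, Set.image_image, Set.image_image]
        exact Set.image_congr fun d _ => by rw [hgapp, inner_add_right]
      rw [h1, Set.singleton_add]
    rw [himg, csInf_add (Set.singleton_nonempty _) bddBelow_singleton hTne hTbddB, csInf_singleton]
  -- the outer supremum
  have houter : (fun u => sInf ((fun d => ⟪-p, B u + E d⟫) '' D)) '' U
      = A + {sInf T} := by
    have h1 : (fun u => sInf ((fun d => ⟪-p, B u + E d⟫) '' D)) '' U
        = (fun a => a + sInf T) '' A := by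
      rw [hA, Set.image_image, Set.image_image]
      exact Set.image_congr fun u _ => by rw [hinner, hgapp]
    rw [h1, Set.add_singleton]
  rw [houter, csSup_add hAne hAbdd (Set.singleton_nonempty _) bddAbove_singleton, csSup_singleton]
  rw [hsupA, hnegT]
  ring
end

section
/- Suppose BU ⊆ ℝ^n is the zonotope {c₁ + Σᵢ θᵢ bᵢ | θᵢ ∈ [−1,1]} and −ED = {c₂ + Σᵢ θᵢ κᵢ bᵢ | θᵢ ∈ [−1,1]} is an aligned zonotope with the same generators bᵢ scaled by κᵢ ∈ [0,1]. Then the Minkowski difference W := BU ⊖ (−ED) equals {c₁ − c₂ + Σᵢ θᵢ (1 − κᵢ) bᵢ | θᵢ ∈ [−1,1]}, it is nonempty, and W ⊕ (−ED) = BU. -/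
open Set Pointwise

section Aux

variable {n np : ℕ}

private lemma zono_convex (g : Fin np → EuclideanSpace ℝ (Fin n)) :
    Convex ℝ {x : EuclideanSpace ℝ (Fin n) |
      ∃ θ : Fin np → ℝ, (∀ i, θ i ∈ Icc (-1:ℝ) 1) ∧ x = ∑ i, θ i • g i} := by
  rintro x ⟨θ, hθ, rfl⟩ y ⟨φ, hφ, rfl⟩ a c ha hc hac
  refine ⟨fun i => a * θ i + c * φ i, fun i => ⟨?_, ?_⟩, ?_⟩
  · show -1 ≤ a * θ i + c * φ i
    nlinarith [(hθ i).1, (hθ i).2, (hφ i).1, (hφ i).2]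
  · show a * θ i + c * φ i ≤ 1
    nlinarith [(hθ i).1, (hθ i).2, (hφ i).1, (hφ i).2]
  · rw [Finset.smul_sum, Finset.smul_sum, ← Finset.sum_add_distrib]
    exact Finset.sum_congr rfl fun i _ => by rw [add_smul, smul_smul, smul_smul]

private lemma zono_closed (g : Fin np → EuclideanSpace ℝ (Fin n)) :
    IsClosed {x : EuclideanSpace ℝ (Fin n) |
      ∃ θ : Fin np → ℝ, (∀ i, θ i ∈ Icc (-1:ℝ) 1) ∧ x = ∑ i, θ i • g i} := by
  have heq : {x : EuclideanSpace ℝ (Fin n) |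
      ∃ θ : Fin np → ℝ, (∀ i, θ i ∈ Icc (-1:ℝ) 1) ∧ x = ∑ i, θ i • g i}
      = (fun θ : Fin np → ℝ => ∑ i, θ i • g i) '' Icc (fun _ => -1) (fun _ => 1) := by
    ext x
    simp only [mem_image, mem_setOf_eq, mem_Icc, Pi.le_def]
    constructor
    · rintro ⟨θ, hθ, rfl⟩
      exact ⟨θ, ⟨fun i => (hθ i).1, fun i => (hθ i).2⟩, rfl⟩
    · rintro ⟨θ, ⟨h1, h2⟩, rfl⟩
      exact ⟨θ, fun i => ⟨h1 i, h2 i⟩, rfl⟩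
  rw [heq]
  exact (isCompact_Icc.image
    (continuous_finset_sum _ fun i _ => (continuous_apply i).smul continuous_const)).isClosed

private lemma mem_zono_of_support (g : Fin np → EuclideanSpace ℝ (Fin n))
    (x : EuclideanSpace ℝ (Fin n))
    (h : ∀ f : EuclideanSpace ℝ (Fin n) →L[ℝ] ℝ, f x ≤ ∑ i, |f (g i)|) :
    ∃ θ : Fin np → ℝ, (∀ i, θ i ∈ Icc (-1:ℝ) 1) ∧ x = ∑ i, θ i • g i := by
  by_contra hx
  obtain ⟨f, u, hfs, hfx⟩ :=
    geometric_hahn_banach_closed_point (zono_convex g) (zono_closed g) hx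
  have hmem : (∑ i, (if 0 ≤ f (g i) then (1:ℝ) else -1) • g i) ∈
      {x : EuclideanSpace ℝ (Fin n) |
        ∃ θ : Fin np → ℝ, (∀ i, θ i ∈ Icc (-1:ℝ) 1) ∧ x = ∑ i, θ i • g i} :=
    ⟨_, fun i => by split <;> norm_num, rfl⟩
  have hlt := hfs _ hmem
  have heq : f (∑ i, (if 0 ≤ f (g i) then (1:ℝ) else -1) • g i) = ∑ i, |f (g i)| := by
    rw [map_sum]
    refine Finset.sum_congr rfl fun i _ => ?_
    rw [map_smul, smul_eq_mul]
    split
    · rw [one_mul, abs_of_nonneg ‹_›]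
    · rw [neg_one_mul, abs_of_neg (lt_of_not_ge ‹_›)]
  rw [heq] at hlt
  linarith [h f]

end Aux

/-- Minkowski difference of aligned zonotopes. -/
theorem aligned_zonotope_minkowski_difference {n np : ℕ}
    (c₁ c₂ : EuclideanSpace ℝ (Fin n)) (b : Fin np → EuclideanSpace ℝ (Fin n))
    (κ : Fin np → ℝ) (hκ : ∀ i, κ i ∈ Icc (0:ℝ) 1)
    (BU NED : Set (EuclideanSpace ℝ (Fin n)))
    (hBU : BU = {x | ∃ θ : Fin np → ℝ,
      (∀ i, θ i ∈ Icc (-1:ℝ) 1) ∧ x = c₁ + ∑ i, θ i • b i})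
    (hNED : NED = {x | ∃ θ : Fin np → ℝ,
      (∀ i, θ i ∈ Icc (-1:ℝ) 1) ∧ x = c₂ + ∑ i, (θ i * κ i) • b i})
    (W : Set (EuclideanSpace ℝ (Fin n)))
    (hW : W = {c | ∀ z ∈ NED, c + z ∈ BU}) :
    W = {x | ∃ θ : Fin np → ℝ,
        (∀ i, θ i ∈ Icc (-1:ℝ) 1) ∧ x = c₁ - c₂ + ∑ i, (θ i * (1 - κ i)) • b i} ∧
      W.Nonempty ∧ W + NED = BU := by
  -- First main claim : W equals the candidate zonotope
  have hmain : W = {x | ∃ θ : Fin np → ℝ,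
      (∀ i, θ i ∈ Icc (-1:ℝ) 1) ∧ x = c₁ - c₂ + ∑ i, (θ i * (1 - κ i)) • b i} := by
    ext c
    constructor
    · -- hard direction : W ⊆ zonotope, via support functionals
      intro hc
      rw [hW, mem_setOf_eq] at hc
      have hsupp : ∀ f : EuclideanSpace ℝ (Fin n) →L[ℝ] ℝ,
          f (c - (c₁ - c₂)) ≤ ∑ i, |f ((1 - κ i) • b i)| := by
        intro f
        set φ : Fin np → ℝ := fun i => if 0 ≤ f (b i) then 1 else -1 with hφdef
        have hφmem : ∀ i, φ i ∈ Icc (-1:ℝ) 1 := fun i => by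
          simp only [hφdef]; split <;> norm_num
        have hz : (c₂ + ∑ i, (φ i * κ i) • b i) ∈ NED := by
          rw [hNED]; exact ⟨φ, hφmem, rfl⟩
        obtain ⟨α, hα, hαeq⟩ := by
          have := hc _ hz
          rw [hBU] at this
          exact this
        have hx : c - (c₁ - c₂) =
            (c + (c₂ + ∑ i, (φ i * κ i) • b i)) - c₁ - ∑ i, (φ i * κ i) • b i := by
          abel
        have hfx : f (c - (c₁ - c₂)) =
            ∑ i, (α i * f (b i) - κ i * |f (b i)|) := by
          rw [hx, hαeq]
          have h1 : f (c₁ + ∑ i, α i • b i - c₁ - ∑ i, (φ i * κ i) • b i)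
              = (∑ i, α i * f (b i)) - ∑ i, (φ i * κ i) * f (b i) := by
            rw [map_sub, map_sub, map_add, map_sum, map_sum]
            simp only [map_smul, smul_eq_mul]
            ring
          rw [h1, ← Finset.sum_sub_distrib]
          refine Finset.sum_congr rfl fun i _ => ?_
          have hφf : φ i * f (b i) = |f (b i)| := by
            simp only [hφdef]
            split
            · rw [one_mul, abs_of_nonneg ‹_›]
            · rw [neg_one_mul, abs_of_neg (lt_of_not_ge ‹_›)]
          rw [mul_comm (φ i) (κ i), mul_assoc, hφf]
        rw [hfx]
        refine Finset.sum_le_sum fun i _ => ?_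
        have h1 : |f ((1 - κ i) • b i)| = (1 - κ i) * |f (b i)| := by
          rw [map_smul, smul_eq_mul, abs_mul, abs_of_nonneg (by linarith [(hκ i).2])]
        rw [h1]
        have h2 : α i * f (b i) ≤ |f (b i)| := by
          calc α i * f (b i) ≤ |α i * f (b i)| := le_abs_self _
            _ = |α i| * |f (b i)| := abs_mul _ _
            _ ≤ 1 * |f (b i)| := by
                apply mul_le_mul_of_nonneg_right _ (abs_nonneg _)
                exact abs_le.2 ⟨(hα i).1, (hα i).2⟩
            _ = |f (b i)| := one_mul _
        nlinarith [abs_nonneg (f (b i))]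
      obtain ⟨θ, hθ, hθeq⟩ := mem_zono_of_support (fun i => (1 - κ i) • b i) _ hsupp
      refine ⟨θ, hθ, ?_⟩
      have : c = c₁ - c₂ + (c - (c₁ - c₂)) := by abel
      rw [this, hθeq]
      congr 1
      exact Finset.sum_congr rfl fun i _ => smul_smul _ _ _
    · -- easy direction : zonotope ⊆ W
      rintro ⟨θ, hθ, rfl⟩
      rw [hW, mem_setOf_eq]
      intro z hz
      rw [hNED] at hz
      obtain ⟨φ, hφ, rfl⟩ := hz
      rw [hBU]
      refine ⟨fun i => θ i * (1 - κ i) + φ i * κ i, fun i => ⟨?_, ?_⟩, ?_⟩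
      · show -1 ≤ θ i * (1 - κ i) + φ i * κ i
        nlinarith [(hθ i).1, (hθ i).2, (hφ i).1, (hφ i).2, (hκ i).1, (hκ i).2]
      · show θ i * (1 - κ i) + φ i * κ i ≤ 1
        nlinarith [(hθ i).1, (hθ i).2, (hφ i).1, (hφ i).2, (hκ i).1, (hκ i).2]
      · have hsum : ∑ i, (θ i * (1 - κ i) + φ i * κ i) • b i
            = (∑ i, (θ i * (1 - κ i)) • b i) + ∑ i, (φ i * κ i) • b i := by
          rw [← Finset.sum_add_distrib]
          exact Finset.sum_congr rfl fun i _ => add_smul _ _ _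
        rw [hsum]; abel
  refine ⟨hmain, ?_, ?_⟩
  · -- nonempty
    rw [hmain]
    exact ⟨c₁ - c₂ + ∑ i, ((0:ℝ) * (1 - κ i)) • b i, 0, fun i => by norm_num, rfl⟩
  · -- W + NED = BU
    ext x
    constructor
    · rintro hx
      rw [Set.mem_add] at hx
      obtain ⟨w, hw, z, hz, rfl⟩ := hx
      rw [hW, mem_setOf_eq] at hw
      exact hw z hz
    · intro hx
      rw [hBU] at hx
      obtain ⟨α, hα, rfl⟩ := hx
      rw [Set.mem_add]
      refine ⟨c₁ - c₂ + ∑ i, (α i * (1 - κ i)) • b i, ?_,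
        c₂ + ∑ i, (α i * κ i) • b i, ?_, ?_⟩
      · rw [hmain]; exact ⟨α, hα, rfl⟩
      · rw [hNED]; exact ⟨α, hα, rfl⟩
      · have hsum : (∑ i, (α i * (1 - κ i)) • b i) + ∑ i, (α i * κ i) • b i
            = ∑ i, α i • b i := by
          rw [← Finset.sum_add_distrib]
          refine Finset.sum_congr rfl fun i _ => ?_
          rw [← add_smul]
          congr 1
          ring
        calc c₁ - c₂ + (∑ i, (α i * (1 - κ i)) • b i) + (c₂ + ∑ i, (α i * κ i) • b i)
            = c₁ + ((∑ i, (α i * (1 - κ i)) • b i) + ∑ i, (α i * κ i) • b i) := by abel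
          _ = c₁ + ∑ i, α i • b i := by rw [hsum]
end

section
/- Let g : ℝ^n → ℝ be convex, let W(s) ⊆ ℝ^n be compact convex nonempty for each s ∈ [t,T], and suppose (ξ*, λ, ω*) satisfy: ξ*' (s) = A(s)ξ*(s) + ω*(s), λ'(s) = −A(s)ᵀλ(s), ω*(s) ∈ argmax_{ω ∈ W(s)} ⟨−λ(s), ω⟩ for a.e. s, with λ(T) a subgradient of g at ξ*(T). Then for every integrable control ω̂ with ω̂(s) ∈ W(s) a.e. and corresponding solution ξ̂ with ξ̂(t) = ξ*(t), one has g(ξ̂(T)) ≥ g(ξ*(T)). Consequently, inf over all admissible controls ω of g(ξᵗᵒᵏ(T)) starting from ξ*(t) at time t equals g(ξ*(T)). -/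
/-!
Along two solutions `x' = A x + u`, `y' = A y + v` the pairing `⟪λ, x - y⟫` with a solution of the
adjoint equation `λ' = -Aᵀ λ` has derivative `⟪λ, u - v⟫`: the terms involving `A` cancel.
The maximum condition makes `⟪λ, ω̂ - ω*⟫ ≥ 0`, so `⟪λ, ξ̂ - ξ*⟫` increases from `0` at time `t`,
and the subgradient inequality at `ξ*(T)` turns `⟪λ(T), ξ̂(T) - ξ*(T)⟫ ≥ 0` into
`g (ξ̂ T) ≥ g (ξ* T)`.
-/

open Set RealInnerProductSpace

section CostatePairing

variable {E : Type*} [NormedAddCommGroup E] [InnerProductSpace ℝ E] [CompleteSpace E]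

theorem hasDerivAt_inner_costate_sub {L : E →L[ℝ] E} {lam x y : ℝ → E} {u v : E} {s : ℝ}
    (hlam : HasDerivAt lam (-(ContinuousLinearMap.adjoint L (lam s))) s)
    (hx : HasDerivAt x (L (x s) + u) s) (hy : HasDerivAt y (L (y s) + v) s) :
    HasDerivAt (fun r => ⟪lam r, x r - y r⟫) ⟪lam s, u - v⟫ s := by
  refine (hlam.inner ℝ (hx.sub hy)).congr_deriv ?_
  rw [inner_neg_left, ContinuousLinearMap.adjoint_inner_left, Pi.sub_apply, map_sub]
  simp only [inner_sub_right, inner_add_right]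
  ring

theorem monotoneOn_inner_costate_sub {t T : ℝ} {A : ℝ → E →L[ℝ] E} {lam x y u v : ℝ → E}
    (hlam : ∀ s ∈ Icc t T, HasDerivAt lam (-(ContinuousLinearMap.adjoint (A s) (lam s))) s)
    (hx : ∀ s ∈ Icc t T, HasDerivAt x (A s (x s) + u s) s)
    (hy : ∀ s ∈ Icc t T, HasDerivAt y (A s (y s) + v s) s)
    (huv : ∀ s ∈ Icc t T, 0 ≤ ⟪lam s, u s - v s⟫) :
    MonotoneOn (fun r => ⟪lam r, x r - y r⟫) (Icc t T) := by
  have hderiv : ∀ s ∈ Icc t T,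
      HasDerivAt (fun r => ⟪lam r, x r - y r⟫) ⟪lam s, u s - v s⟫ s := fun s hs =>
    hasDerivAt_inner_costate_sub (hlam s hs) (hx s hs) (hy s hs)
  refine monotoneOn_of_hasDerivWithinAt_nonneg (convex_Icc t T)
    (fun s hs => (hderiv s hs).continuousAt.continuousWithinAt) (fun s hs => ?_)
    (fun s hs => huv s (interior_subset hs))
  exact (hderiv s (interior_subset hs)).hasDerivWithinAt

end CostatePairing

theorem extremal_trajectory_optimality_general {n : ℕ} (t T : ℝ) (htT : t ≤ T)
    (A : ℝ → (EuclideanSpace ℝ (Fin n) →L[ℝ] EuclideanSpace ℝ (Fin n)))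
    (g : EuclideanSpace ℝ (Fin n) → ℝ)
    (W : ℝ → Set (EuclideanSpace ℝ (Fin n)))
    (ξstar lam ωstar : ℝ → EuclideanSpace ℝ (Fin n))
    (hξstar : ∀ s ∈ Icc t T, HasDerivAt ξstar (A s (ξstar s) + ωstar s) s)
    (hlam : ∀ s ∈ Icc t T,
      HasDerivAt lam (-(ContinuousLinearMap.adjoint (A s) (lam s))) s)
    (hωstar : ∀ s ∈ Icc t T, ωstar s ∈ W s ∧
      ∀ ω ∈ W s, ⟪-lam s, ω⟫ ≤ ⟪-lam s, ωstar s⟫)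
    (hsubgrad : ∀ y, g y ≥ g (ξstar T) + ⟪lam T, y - ξstar T⟫) :
    (∀ (ωhat ξhat : ℝ → EuclideanSpace ℝ (Fin n)),
      (∀ s ∈ Icc t T, ωhat s ∈ W s) →
      (∀ s ∈ Icc t T, HasDerivAt ξhat (A s (ξhat s) + ωhat s) s) →
      ξhat t = ξstar t →
      g (ξhat T) ≥ g (ξstar T)) ∧
    IsLeast {y : ℝ | ∃ ωhat ξhat : ℝ → EuclideanSpace ℝ (Fin n),
        (∀ s ∈ Icc t T, ωhat s ∈ W s) ∧
        (∀ s ∈ Icc t T, HasDerivAt ξhat (A s (ξhat s) + ωhat s) s) ∧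
        ξhat t = ξstar t ∧ y = g (ξhat T)}
      (g (ξstar T)) := by
  have optimal : ∀ (ωhat ξhat : ℝ → EuclideanSpace ℝ (Fin n)),
      (∀ s ∈ Icc t T, ωhat s ∈ W s) →
      (∀ s ∈ Icc t T, HasDerivAt ξhat (A s (ξhat s) + ωhat s) s) →
      ξhat t = ξstar t →
      g (ξhat T) ≥ g (ξstar T) := by
    intro ωhat ξhat hωhat hξhat hstart
    have hpair : ∀ s ∈ Icc t T, 0 ≤ ⟪lam s, ωhat s - ωstar s⟫ := fun s hs => by
      have hmax := (hωstar s hs).2 (ωhat s) (hωhat s hs)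
      rw [inner_neg_left, inner_neg_left] at hmax
      rw [inner_sub_right]
      linarith
    have hmono := monotoneOn_inner_costate_sub hlam hξhat hξstar hpair
      (left_mem_Icc.2 htT) (right_mem_Icc.2 htT) htT
    simp only [hstart, sub_self, inner_zero_right] at hmono
    linarith [hsubgrad (ξhat T)]
  refine ⟨optimal, ⟨ωstar, ξstar, fun s hs => (hωstar s hs).1, hξstar, rfl, rfl⟩, ?_⟩
  rintro y ⟨ωhat, ξhat, hωhat, hξhat, hstart, rfl⟩
  exact optimal ωhat ξhat hωhat hξhat hstart

/-- Pontryagin-type optimality: extremal trajectories of the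
  trimmed system minimise the convex terminal cost among all admissible
  trajectories from the same state. -/
theorem extremal_trajectory_optimality {n : ℕ} (t T : ℝ) (htT : t ≤ T)
    (A : ℝ → (EuclideanSpace ℝ (Fin n) →L[ℝ] EuclideanSpace ℝ (Fin n)))
    (hA : ContinuousOn A (Icc t T))
    (g : EuclideanSpace ℝ (Fin n) → ℝ) (hg : ConvexOn ℝ Set.univ g)
    (W : ℝ → Set (EuclideanSpace ℝ (Fin n)))
    (hWc : ∀ s ∈ Icc t T, IsCompact (W s))
    (hWconv : ∀ s ∈ Icc t T, Convex ℝ (W s))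
    (hWne : ∀ s ∈ Icc t T, (W s).Nonempty)
    (ξstar lam ωstar : ℝ → EuclideanSpace ℝ (Fin n))
    (hξstar : ∀ s ∈ Icc t T, HasDerivAt ξstar (A s (ξstar s) + ωstar s) s)
    (hlam : ∀ s ∈ Icc t T,
      HasDerivAt lam (-(ContinuousLinearMap.adjoint (A s) (lam s))) s)
    (hωstar : ∀ s ∈ Icc t T, ωstar s ∈ W s ∧
      ∀ ω ∈ W s, ⟪-lam s, ω⟫ ≤ ⟪-lam s, ωstar s⟫)
    (hsubgrad : ∀ y, g y ≥ g (ξstar T) + ⟪lam T, y - ξstar T⟫) :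
    (∀ (ωhat ξhat : ℝ → EuclideanSpace ℝ (Fin n)),
      (∀ s ∈ Icc t T, ωhat s ∈ W s) →
      (∀ s ∈ Icc t T, HasDerivAt ξhat (A s (ξhat s) + ωhat s) s) →
      ξhat t = ξstar t →
      g (ξhat T) ≥ g (ξstar T)) ∧
    IsLeast {y : ℝ | ∃ ωhat ξhat : ℝ → EuclideanSpace ℝ (Fin n),
        (∀ s ∈ Icc t T, ωhat s ∈ W s) ∧
        (∀ s ∈ Icc t T, HasDerivAt ξhat (A s (ξhat s) + ωhat s) s) ∧
        ξhat t = ξstar t ∧ y = g (ξhat T)}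
      (g (ξstar T)) :=
  extremal_trajectory_optimality_general t T htT A g W ξstar lam ωstar hξstar hlam hωstar hsubgrad
end
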